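/- Assume α ∈ (0,1). Let β : (0,1) → [0,∞) be any function with β(ε) ≤ |ln ε| and lim_{ε→0} |ln ε|^{α/(1−α)}·e^{−β(ε)} = 0, set a(ε) = ( (1−α)/γ⋆ · (|ln ε| − β(ε)) )^{1/(1−α)}, and let b̃(ε) = C |ln ε|^{1/(1−α)} where C is any constant with C > ((1−α)/γ⋆)^{1/(1−α)}. Then the first passage time of the Wang–Landau process from state 1 to state 2 satisfies lim_{ε→0} P( a(ε) < T⁰₁→₂ < b̃(ε) ) = 1. -/

import Mathlib

open MeasureTheory ProbabilityTheory Filter Real Set Topology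

noncomputable section

/-- The state space: index `0` is state "1", index `1` is state "2", index `2` is state "3". -/
abbrev WLState := Fin 3

/-- First passage time of the trajectory `ω` to the state `s`
(with the convention `sInf ∅ = 0`). -/
def hitTime (s : WLState) (ω : ℕ → WLState) : ℕ := sInf {n : ℕ | ω n = s}

/-- A measure `μ` on trajectory space is the law of the (possibly path-dependent) Markov chain
with initial state `x0` and transition matrix `P x k` at time `k` given the past path `x`,
expressed through its cylinder probabilities. -/
def IsChainLaw (P : (ℕ → WLState) → ℕ → WLState → WLState → ℝ) (x0 : WLState)
    (μ : Measure (ℕ → WLState)) : Prop :=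
  ∀ (n : ℕ) (x : ℕ → WLState),
    μ {ω : ℕ → WLState | ∀ k ≤ n, ω k = x k} =
      (if x 0 = x0 then (1 : ENNReal) else 0) *
        ∏ k ∈ Finset.range n, ENNReal.ofReal (P x k (x k) (x (k + 1)))

/-- The unnormalized Wang-Landau weight `θ̃ₙ(i)` along the path `x`, with step sizes
`γₖ = γs k^(-α)`: it satisfies `θ̃₀ = (1,1,1)` and `θ̃ₙ₊₁(i) = θ̃ₙ(i)(1 + γₙ₊₁ 1_{xₙ₊₁ = i})`. -/
def wtilde (γs α : ℝ) (x : ℕ → WLState) (n : ℕ) (i : WLState) : ℝ :=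
  ∏ k ∈ Finset.Icc 1 n, (1 + if x k = i then γs * (k : ℝ) ^ (-α) else 0)

/-- The normalized Wang-Landau weight `θₙ(i)` along the path `x`. -/
def thetaNorm (γs α : ℝ) (x : ℕ → WLState) (n : ℕ) (i : WLState) : ℝ :=
  wtilde γs α x n i / ∑ j, wtilde γs α x n j

/-- The Metropolis transition matrix `P_θ` biased by the weight vector `θ`. -/
def PWL (ε : ℝ) (θ : WLState → ℝ) : WLState → WLState → ℝ :=
  ![![1 - 1 / 3 * min (ε * θ 0 / θ 1) 1, 1 / 3 * min (ε * θ 0 / θ 1) 1, 0],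
    ![1 / 3 * min (θ 1 / (ε * θ 0)) 1,
      1 - 1 / 3 * min (θ 1 / (ε * θ 0)) 1 - 1 / 3 * min (θ 1 / (ε * θ 2)) 1,
      1 / 3 * min (θ 1 / (ε * θ 2)) 1],
    ![0, 1 / 3 * min (ε * θ 2 / θ 1) 1, 1 - 1 / 3 * min (ε * θ 2 / θ 1) 1]]

/-- `μ` is the law of the Wang-Landau process with parameters `ε`, `γs`, `α`,
started at state "1" (index 0). -/
def IsWLLaw (ε γs α : ℝ) (μ : Measure (ℕ → WLState)) : Prop :=
  IsChainLaw (fun x k => PWL ε (thetaNorm γs α x k)) 0 μ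

/-!
Until the chain first visits state 2 its path is frozen at state 1, so along it
`θ̃ₖ = (Πₖ, 1, 1)` with `Πₖ = ∏_{j ≤ k} (1 + γ⋆ j^{-α})`, the step `1 → 2` at time `k` has
probability `qₖ = min(ε Πₖ, 1) / 3`, and `P(T > n) = ∏_{k < n} (1 - qₖ)`.

Since `log Πₖ ≈ γ⋆ k^{1-α} / (1-α)`, the weight `ε Πₖ` is still tiny before `a(ε)`: the sum of
`Πₖ` over `k < N` is at most `N^α Π_N / γ⋆`, which gives
`P(T ≤ a(ε)) ≤ ∑_{k < a(ε)} qₖ ≲ e^{-β(ε)} |ln ε|^{α/(1-α)} → 0`.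
After time `(d |ln ε|)^{1/(1-α)}` for any `d > (1-α)/γ⋆` every step leaves state 1 with
probability `1/3`, and since `C > ((1-α)/γ⋆)^{1/(1-α)}` the number of such steps before `b̃(ε)`
tends to infinity, so `P(T ≥ b̃(ε))` decays geometrically.
-/

lemma one_sub_sum_le_prod_one_sub {ι : Type*} [LinearOrder ι] {s : Finset ι} {f : ι → ℝ}
    (h0 : ∀ i ∈ s, 0 ≤ f i) (h1 : ∀ i ∈ s, f i ≤ 1) :
    1 - ∑ i ∈ s, f i ≤ ∏ i ∈ s, (1 - f i) := by
  rw [Finset.prod_one_sub_ordered]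
  gcongr with i hi
  refine mul_le_of_le_one_right (h0 i hi) (Finset.prod_le_one (fun j hj => ?_) fun j hj => ?_)
  · linarith [h1 j (Finset.mem_filter.1 hj).1]
  · linarith [h0 j (Finset.mem_filter.1 hj).1]

lemma natCast_sub_le_natCast_tsub (m n : ℕ) : (m : ℝ) - n ≤ ((m - n : ℕ) : ℝ) := by
  have h : m ≤ m - n + n := by omega
  rw [sub_le_iff_le_add]; exact_mod_cast h

lemma natCast_ceil_sub_one_lt {b : ℝ} (hb : 0 < b) : ((⌈b⌉₊ - 1 : ℕ) : ℝ) < b :=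
  ((Nat.ceil_eq_iff (Nat.ceil_pos.2 hb).ne').1 rfl).1

lemma natCeil_rpow_rpow_le {x p r : ℝ} (hx : 0 ≤ x) (hr0 : 0 ≤ r) (hr1 : r ≤ 1) :
    (⌈x ^ p⌉₊ : ℝ) ^ r ≤ x ^ (p * r) + 1 := by
  have hxp : 0 ≤ x ^ p := Real.rpow_nonneg hx p
  calc (⌈x ^ p⌉₊ : ℝ) ^ r ≤ (x ^ p + 1) ^ r := by
        gcongr
        exact (Nat.ceil_lt_add_one hxp).le
    _ ≤ (x ^ p) ^ r + 1 ^ r := Real.rpow_add_le_add_rpow hxp zero_le_one hr0 hr1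
    _ = x ^ (p * r) + 1 := by rw [← Real.rpow_mul hx, Real.one_rpow]

lemma rpow_le_rpow_add_mul_sub {p x y : ℝ} (hx : 0 < x) (hy : 0 ≤ y) (hp0 : 0 ≤ p)
    (hp1 : p ≤ 1) : y ^ p ≤ x ^ p + p * x ^ (p - 1) * (y - x) := by
  have hbern := rpow_one_add_le_one_add_mul_self (s := y / x - 1)
    (by linarith [div_nonneg hy hx.le]) hp0 hp1
  rw [add_sub_cancel] at hbern
  calc y ^ p = x ^ p * (y / x) ^ p := by
        rw [← Real.mul_rpow hx.le (div_nonneg hy hx.le), mul_div_cancel₀ _ hx.ne']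
    _ ≤ x ^ p * (1 + p * (y / x - 1)) := by gcongr
    _ = x ^ p + p * x ^ (p - 1) * (y - x) := by
        rw [Real.rpow_sub_one hx.ne']
        field_simp

lemma one_sub_mul_sum_rpow_neg_le {α : ℝ} (hα0 : 0 ≤ α) (hα1 : α ≤ 1) (N : ℕ) :
    (1 - α) * ∑ j ∈ Finset.Icc 1 N, (j : ℝ) ^ (-α) ≤ (N : ℝ) ^ (1 - α) := by
  induction N with
  | zero => simp [Real.zero_rpow_nonneg]
  | succ N ih =>
    have htangent := rpow_le_rpow_add_mul_sub (p := 1 - α) (x := N + 1) (y := N)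
      (by positivity) (by positivity) (by linarith) (by linarith)
    rw [show 1 - α - 1 = -α by ring] at htangent
    rw [Finset.sum_Icc_succ_top (by omega), mul_add]
    push_cast
    linarith

lemma rpow_sub_rpow_le_one_sub_mul_sum {α : ℝ} (hα0 : 0 ≤ α) (hα1 : α ≤ 1) {J N : ℕ}
    (hJ : 0 < J) (hJN : J ≤ N) :
    (N : ℝ) ^ (1 - α) - (J : ℝ) ^ (1 - α) ≤ (1 - α) * ∑ j ∈ Finset.Ico J N, (j : ℝ) ^ (-α) := by
  induction N, hJN using Nat.le_induction with
  | base => simp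
  | succ N hJN ih =>
    have htangent := rpow_le_rpow_add_mul_sub (p := 1 - α) (x := N) (y := N + 1)
      (by exact_mod_cast hJ.trans_le hJN) (by positivity) (by linarith) (by linarith)
    rw [show 1 - α - 1 = -α by ring] at htangent
    rw [Finset.sum_Ico_succ_top hJN, mul_add]
    push_cast
    linarith

lemma mul_exp_abs_log {ε : ℝ} (h0 : 0 < ε) (h1 : ε ≤ 1) : ε * Real.exp |Real.log ε| = 1 := by
  rw [abs_of_nonpos (Real.log_nonpos h0.le h1), Real.exp_neg, Real.exp_log h0,
    mul_inv_cancel₀ h0.ne']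

lemma tendsto_abs_log_nhdsWithin_Ioo :
    Tendsto (fun ε : ℝ => |Real.log ε|) (𝓝[Set.Ioo 0 1] 0) atTop := by
  have hlog : Tendsto Real.log (𝓝[Set.Ioo 0 1] 0) atBot :=
    Real.tendsto_log_nhdsGT_zero.mono_left (nhdsWithin_mono 0 Set.Ioo_subset_Ioi_self)
  refine (tendsto_neg_atBot_atTop.comp hlog).congr' ?_
  filter_upwards [self_mem_nhdsWithin] with ε hε
  exact (abs_of_neg (Real.log_neg hε.1 hε.2)).symm

namespace IsChainLaw

variable {P : (ℕ → WLState) → ℕ → WLState → WLState → ℝ} {μ : Measure (ℕ → WLState)}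

lemma measure_cylinder_eq_zero {x₀ : WLState} (hμ : IsChainLaw P x₀ μ) {x : ℕ → WLState}
    {n k : ℕ} (hk : k < n) (hx : P x k (x k) (x (k + 1)) = 0) :
    μ {ω | ∀ j ≤ n, ω j = x j} = 0 := by
  rw [hμ, Finset.prod_eq_zero (Finset.mem_range.2 hk) (by rw [hx, ENNReal.ofReal_zero]),
    mul_zero]

/-- A chain started at `0` that never jumps from `0` to `2` avoids `1` up to time `n` only by
staying at `0`. -/
theorem measure_forall_ne_one (hμ : IsChainLaw P 0 μ) (h02 : ∀ x k, P x k 0 2 = 0) (n : ℕ) :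
    μ {ω | ∀ k ≤ n, ω k ≠ 1} =
      ∏ k ∈ Finset.range n, ENNReal.ofReal (P (fun _ => 0) k 0 0) := by
  classical
  let jumpPath (m : ℕ) : ℕ → WLState := fun k => if k < m then 0 else 2
  have hjump : ∀ m, μ {ω | ∀ k ≤ m, ω k = jumpPath m k} = 0 := by
    rintro (_ | m)
    · rw [hμ]; simp [jumpPath]
    · exact measure_cylinder_eq_zero hμ m.lt_succ_self (by simp [jumpPath, h02])
  have hstay : μ {ω | ∀ k ≤ n, ω k = 0} =
      ∏ k ∈ Finset.range n, ENNReal.ofReal (P (fun _ => 0) k 0 0) := by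
    simpa using hμ n (fun _ => 0)
  have hsub : {ω : ℕ → WLState | ∀ k ≤ n, ω k ≠ 1} ⊆
      {ω | ∀ k ≤ n, ω k = 0} ∪ ⋃ m, {ω | ∀ k ≤ m, ω k = jumpPath m k} := by
    intro ω hω
    by_cases hzero : ∀ k ≤ n, ω k = 0
    · exact Or.inl hzero
    push Not at hzero
    obtain ⟨hmn, hm0⟩ := Nat.find_spec hzero
    have hbefore : ∀ k < Nat.find hzero, ω k = 0 := fun k hk =>
      not_not.1 fun h => Nat.find_min hzero hk ⟨(hk.trans_le hmn).le, h⟩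
    have hm2 : ω (Nat.find hzero) = 2 := by
      have hm1 := hω _ hmn
      revert hm0 hm1; generalize ω (Nat.find hzero) = v; decide +revert
    refine Or.inr (Set.mem_iUnion.2 ⟨Nat.find hzero, fun k hk => ?_⟩)
    rcases hk.lt_or_eq with hk | rfl
    · simp [jumpPath, hk, hbefore k hk]
    · simp [jumpPath, hm2]
  refine le_antisymm ?_ (hstay ▸ measure_mono fun ω hω k hk => by simp [hω k hk])
  calc μ {ω | ∀ k ≤ n, ω k ≠ 1}
      ≤ μ {ω | ∀ k ≤ n, ω k = 0} + μ (⋃ m, {ω | ∀ k ≤ m, ω k = jumpPath m k}) :=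
        (measure_mono hsub).trans (measure_union_le _ _)
    _ = _ := by rw [measure_iUnion_null hjump, add_zero, hstay]

end IsChainLaw

namespace WangLandau

variable {ε γs α : ℝ}

/-- Along the path that stays at state 1 (index `0`), `θ̃ₖ = (stayWeight γs α k, 1, 1)`, and
`leaveProb ε γs α k` is the probability of the step `1 → 2` at time `k`. -/
def stayWeight (γs α : ℝ) (k : ℕ) : ℝ := ∏ j ∈ Finset.Icc 1 k, (1 + γs * (j : ℝ) ^ (-α))

def leaveProb (ε γs α : ℝ) (k : ℕ) : ℝ := 1 / 3 * min (ε * stayWeight γs α k) 1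

lemma one_le_stayWeight (hγs : 0 ≤ γs) (k : ℕ) : 1 ≤ stayWeight γs α k :=
  Finset.one_le_prod fun j _ => le_add_of_nonneg_right (by positivity)

lemma stayWeight_pos (hγs : 0 ≤ γs) (k : ℕ) : 0 < stayWeight γs α k :=
  one_pos.trans_le (one_le_stayWeight hγs k)

lemma stayWeight_succ (γs α : ℝ) (k : ℕ) :
    stayWeight γs α (k + 1) = stayWeight γs α k * (1 + γs * ((k + 1 : ℕ) : ℝ) ^ (-α)) :=
  Finset.prod_Icc_succ_top (by omega) _

lemma wtilde_const_zero (γs α : ℝ) (k : ℕ) (i : WLState) :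
    wtilde γs α (fun _ => 0) k i = if i = 0 then stayWeight γs α k else 1 := by
  split_ifs with hi
  · simp [wtilde, stayWeight, hi]
  · simp [wtilde, Ne.symm hi]

lemma PWL_thetaNorm_const_zero (hγs : 0 ≤ γs) (k : ℕ) :
    PWL ε (thetaNorm γs α (fun _ => 0) k) 0 0 = 1 - leaveProb ε γs α k := by
  set θ := thetaNorm γs α (fun _ => 0) k
  have hratio : ε * θ 0 / θ 1 = ε * stayWeight γs α k := by
    have hS : stayWeight γs α k + 1 + 1 ≠ 0 := by linarith [stayWeight_pos (α := α) hγs k]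
    simp [θ, thetaNorm, Fin.sum_univ_three, wtilde_const_zero]
    field_simp
  change 1 - 1 / 3 * min (ε * θ 0 / θ 1) 1 = _
  rw [hratio, leaveProb]

lemma leaveProb_nonneg (hε : 0 ≤ ε) (hγs : 0 ≤ γs) (k : ℕ) : 0 ≤ leaveProb ε γs α k := by
  have := stayWeight_pos (α := α) hγs k
  unfold leaveProb; positivity

lemma leaveProb_le (ε γs α : ℝ) (k : ℕ) : leaveProb ε γs α k ≤ 1 / 3 := by
  unfold leaveProb; linarith [min_le_right (ε * stayWeight γs α k) 1]

lemma leaveProb_of_one_le {k : ℕ} (h : 1 ≤ ε * stayWeight γs α k) : leaveProb ε γs α k = 1 / 3 := by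
  rw [leaveProb, min_eq_right h, mul_one]

theorem measure_forall_ne_one (hγs : 0 ≤ γs) {μ : Measure (ℕ → WLState)}
    (hμ : IsWLLaw ε γs α μ) (n : ℕ) :
    μ {ω | ∀ k ≤ n, ω k ≠ 1} = ∏ k ∈ Finset.range n, ENNReal.ofReal (1 - leaveProb ε γs α k) := by
  rw [IsChainLaw.measure_forall_ne_one hμ fun _ _ => rfl]
  simp only [PWL_thetaNorm_const_zero hγs]

theorem one_sub_sum_sub_prod_le_measure_hitTime (hε : 0 ≤ ε) (hγs : 0 ≤ γs)
    {μ : Measure (ℕ → WLState)} [IsProbabilityMeasure μ] (hμ : IsWLLaw ε γs α μ)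
    {a b : ℝ} {N M : ℕ} (ha : a ≤ N) (hb : (M : ℝ) < b) :
    1 - ∑ k ∈ Finset.range N, leaveProb ε γs α k - ∏ k ∈ Finset.range M, (1 - leaveProb ε γs α k) ≤
      (μ {ω | a < (hitTime 1 ω : ℝ) ∧ (hitTime 1 ω : ℝ) < b}).toReal := by
  have hq0 := leaveProb_nonneg (α := α) hε hγs
  have hq1 : ∀ k, 0 ≤ 1 - leaveProb ε γs α k := fun k => by linarith [leaveProb_le ε γs α k]
  have hnohit : ∀ n, μ.real {ω | ∀ k ≤ n, ω k ≠ 1} =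
      ∏ k ∈ Finset.range n, (1 - leaveProb ε γs α k) := fun n => by
    rw [measureReal_def, measure_forall_ne_one hγs hμ, ENNReal.toReal_prod]
    exact Finset.prod_congr rfl fun k _ => ENNReal.toReal_ofReal (hq1 k)
  have hsub : {ω : ℕ → WLState | ∀ k ≤ N, ω k ≠ 1} ⊆
      {ω | a < (hitTime 1 ω : ℝ) ∧ (hitTime 1 ω : ℝ) < b} ∪ {ω | ∀ k ≤ M, ω k ≠ 1} := by
    intro ω hN
    by_cases hM : ∀ k ≤ M, ω k ≠ 1
    · exact Or.inr hM
    push Not at hM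
    obtain ⟨m, hmM, hm⟩ := hM
    have hhit : ω (hitTime 1 ω) = 1 := Nat.sInf_mem (s := {n | ω n = 1}) ⟨m, hm⟩
    have hle : hitTime 1 ω ≤ m := Nat.sInf_le hm
    have hgt : N < hitTime 1 ω := lt_of_not_ge fun h => hN _ h hhit
    refine Or.inl ⟨ha.trans_lt (by exact_mod_cast hgt), lt_of_le_of_lt ?_ hb⟩
    exact_mod_cast hle.trans hmM
  calc 1 - ∑ k ∈ Finset.range N, leaveProb ε γs α k - ∏ k ∈ Finset.range M, (1 - leaveProb ε γs α k)
      ≤ ∏ k ∈ Finset.range N, (1 - leaveProb ε γs α k) -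
          ∏ k ∈ Finset.range M, (1 - leaveProb ε γs α k) := by
        gcongr
        exact one_sub_sum_le_prod_one_sub (fun k _ => hq0 k)
          fun k _ => (leaveProb_le ε γs α k).trans (by norm_num)
    _ ≤ μ.real {ω | a < (hitTime 1 ω : ℝ) ∧ (hitTime 1 ω : ℝ) < b} := by
        rw [← hnohit, ← hnohit, sub_le_iff_le_add]
        exact (measureReal_mono hsub).trans (measureReal_union_le _ _)

lemma stayWeight_le_exp (hγs : 0 ≤ γs) (hα0 : 0 ≤ α) (hα1 : α < 1) (N : ℕ) :
    stayWeight γs α N ≤ Real.exp (γs * (N : ℝ) ^ (1 - α) / (1 - α)) := by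
  calc stayWeight γs α N ≤ ∏ j ∈ Finset.Icc 1 N, Real.exp (γs * (j : ℝ) ^ (-α)) :=
        Finset.prod_le_prod (fun j _ => by positivity) fun j _ => by
          linarith [Real.add_one_le_exp (γs * (j : ℝ) ^ (-α))]
    _ = Real.exp (γs * ∑ j ∈ Finset.Icc 1 N, (j : ℝ) ^ (-α)) := by
        rw [← Real.exp_sum, Finset.mul_sum]
    _ ≤ Real.exp (γs * (N : ℝ) ^ (1 - α) / (1 - α)) := by
        rw [Real.exp_le_exp, mul_div_assoc]
        gcongr
        rw [le_div_iff₀ (by linarith), mul_comm]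
        exact one_sub_mul_sum_rpow_neg_le hα0 hα1.le N

/-- Since `stayWeight (k + 1) - stayWeight k ≥ γs N^(-α) stayWeight k` for `k < N`, the sum
telescopes. -/
lemma mul_sum_stayWeight_le (hγs : 0 ≤ γs) (hα : 0 ≤ α) (N : ℕ) :
    γs * ∑ k ∈ Finset.range N, stayWeight γs α k ≤ (N : ℝ) ^ α * stayWeight γs α N := by
  rcases N.eq_zero_or_pos with rfl | hN
  · simpa using mul_nonneg (Real.rpow_nonneg le_rfl α) (stayWeight_pos (α := α) hγs 0).le
  have hNpos : (0 : ℝ) < N := by exact_mod_cast hN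
  have hstep : ∀ k ∈ Finset.range N, (N : ℝ) ^ (-α) * (γs * stayWeight γs α k) ≤
      stayWeight γs α (k + 1) - stayWeight γs α k := fun k hk => by
    have hkN : ((k + 1 : ℕ) : ℝ) ≤ N := by exact_mod_cast Finset.mem_range.1 hk
    have hrpow : (N : ℝ) ^ (-α) ≤ ((k + 1 : ℕ) : ℝ) ^ (-α) :=
      Real.rpow_le_rpow_of_nonpos (by positivity) hkN (by linarith)
    have := stayWeight_pos (α := α) hγs k
    rw [stayWeight_succ]
    nlinarith [mul_le_mul_of_nonneg_left hrpow (mul_nonneg hγs this.le)]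
  have htel := Finset.sum_le_sum hstep
  rw [← Finset.mul_sum, ← Finset.mul_sum, Finset.sum_range_sub] at htel
  have hcancel : (N : ℝ) ^ α * (N : ℝ) ^ (-α) = 1 := by
    rw [Real.rpow_neg hNpos.le, mul_inv_cancel₀ (by positivity)]
  have := one_le_stayWeight (α := α) hγs 0
  have := Real.rpow_pos_of_pos hNpos α
  calc γs * ∑ k ∈ Finset.range N, stayWeight γs α k
      = (N : ℝ) ^ α * ((N : ℝ) ^ (-α) * (γs * ∑ k ∈ Finset.range N, stayWeight γs α k)) := by
        rw [← mul_assoc, hcancel, one_mul]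
    _ ≤ (N : ℝ) ^ α * stayWeight γs α N := by gcongr; linarith

lemma log_stayWeight_ge (hγs : 0 ≤ γs) (hα0 : 0 ≤ α) (hα1 : α < 1) {δ : ℝ} (hδ : 0 ≤ δ)
    {J k : ℕ} (hJ : 0 < J) (hJk : J ≤ k) (hJδ : ∀ j ≥ J, γs * (j : ℝ) ^ (-α) ≤ δ) :
    γs / ((1 + δ) * (1 - α)) * ((k : ℝ) ^ (1 - α) - (J : ℝ) ^ (1 - α)) ≤
      Real.log (stayWeight γs α k) := by
  have hfactor : ∀ j : ℕ, 0 < 1 + γs * (j : ℝ) ^ (-α) := fun j => by positivity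
  have hlog_term : ∀ j ≥ J, γs / (1 + δ) * (j : ℝ) ^ (-α) ≤ Real.log (1 + γs * (j : ℝ) ^ (-α)) :=
    fun j hj => by
      set x := γs * (j : ℝ) ^ (-α)
      have hx0 : 0 ≤ x := by positivity
      refine le_trans ?_ (Real.le_log_one_add_of_nonneg hx0)
      rw [div_mul_eq_mul_div, mul_comm, div_le_div_iff₀ (by positivity) (by positivity)]
      nlinarith [hJδ j hj]
  calc γs / ((1 + δ) * (1 - α)) * ((k : ℝ) ^ (1 - α) - (J : ℝ) ^ (1 - α))
      ≤ γs / ((1 + δ) * (1 - α)) * ((1 - α) * ∑ j ∈ Finset.Ico J k, (j : ℝ) ^ (-α)) := by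
        gcongr
        exact rpow_sub_rpow_le_one_sub_mul_sum hα0 hα1.le hJ hJk
    _ = ∑ j ∈ Finset.Ico J k, γs / (1 + δ) * (j : ℝ) ^ (-α) := by
        rw [Finset.mul_sum, Finset.mul_sum]
        refine Finset.sum_congr rfl fun j _ => ?_
        field_simp [(by linarith : (1 : ℝ) - α ≠ 0)]
    _ ≤ ∑ j ∈ Finset.Ico J k, Real.log (1 + γs * (j : ℝ) ^ (-α)) :=
        Finset.sum_le_sum fun j hj => hlog_term j (Finset.mem_Ico.1 hj).1
    _ ≤ ∑ j ∈ Finset.Icc 1 k, Real.log (1 + γs * (j : ℝ) ^ (-α)) :=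
        Finset.sum_le_sum_of_subset_of_nonneg
          (fun j hj => Finset.mem_Icc.2 ⟨hJ.trans_le (Finset.mem_Ico.1 hj).1,
            (Finset.mem_Ico.1 hj).2.le⟩)
          fun j _ _ => Real.log_nonneg (le_add_of_nonneg_right (by positivity))
    _ = Real.log (stayWeight γs α k) := (Real.log_prod fun j _ => (hfactor j).ne').symm

lemma mul_stayWeight_natCeil_le (hε : ε ∈ Set.Ioo 0 1) (hγs : 0 < γs) (hα0 : 0 ≤ α)
    (hα1 : α < 1) {b : ℝ} (hbL : b ≤ |Real.log ε|) :
    ε * stayWeight γs α ⌈((1 - α) / γs * (|Real.log ε| - b)) ^ (1 / (1 - α))⌉₊ ≤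
      Real.exp (γs / (1 - α)) * Real.exp (-b) := by
  have h1α : 0 < 1 - α := by linarith
  set L := |Real.log ε|
  set x := (1 - α) / γs * (L - b)
  set N := ⌈x ^ (1 / (1 - α))⌉₊
  have hx0 : 0 ≤ x := mul_nonneg (by positivity) (by linarith)
  have hN : (N : ℝ) ^ (1 - α) ≤ x + 1 := by
    have h := natCeil_rpow_rpow_le (p := 1 / (1 - α)) hx0 h1α.le (by linarith)
    rwa [one_div_mul_cancel h1α.ne', Real.rpow_one] at h
  have hexp : γs * (N : ℝ) ^ (1 - α) / (1 - α) ≤ L + -b + γs / (1 - α) := by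
    rw [div_le_iff₀ h1α]
    have : γs * x = (1 - α) * (L - b) := by simp only [x]; field_simp
    have : γs / (1 - α) * (1 - α) = γs := div_mul_cancel₀ _ h1α.ne'
    nlinarith [mul_le_mul_of_nonneg_left hN hγs.le]
  calc ε * stayWeight γs α N ≤ ε * Real.exp (L + -b + γs / (1 - α)) :=
        mul_le_mul_of_nonneg_left
          ((stayWeight_le_exp hγs.le hα0 hα1 N).trans (Real.exp_le_exp.2 hexp)) hε.1.le
    _ = Real.exp (γs / (1 - α)) * Real.exp (-b) := by
        rw [Real.exp_add, Real.exp_add, ← mul_assoc, ← mul_assoc,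
          mul_exp_abs_log hε.1 hε.2.le]
        ring

theorem sum_leaveProb_le (hε : ε ∈ Set.Ioo 0 1) (hγs : 0 < γs) (hα0 : 0 ≤ α) (hα1 : α < 1)
    {b : ℝ} (hb0 : 0 ≤ b) (hbL : b ≤ |Real.log ε|) :
    ∑ k ∈ Finset.range ⌈((1 - α) / γs * (|Real.log ε| - b)) ^ (1 / (1 - α))⌉₊,
        leaveProb ε γs α k ≤
      Real.exp (γs / (1 - α)) / (3 * γs) *
        (((1 - α) / γs) ^ (α / (1 - α)) * (|Real.log ε| ^ (α / (1 - α)) * Real.exp (-b)) +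
          Real.exp (-b)) := by
  set L := |Real.log ε|
  set x := (1 - α) / γs * (L - b)
  set N := ⌈x ^ (1 / (1 - α))⌉₊
  have hx0 : 0 ≤ x := mul_nonneg (div_nonneg (by linarith) hγs.le) (by linarith)
  have hN : (N : ℝ) ^ α ≤ ((1 - α) / γs) ^ (α / (1 - α)) * L ^ (α / (1 - α)) + 1 := by
    have h := natCeil_rpow_rpow_le (p := 1 / (1 - α)) hx0 hα0 hα1.le
    rw [one_div_mul_eq_div] at h
    rw [← Real.mul_rpow (div_nonneg (by linarith) hγs.le) (abs_nonneg _)]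
    refine h.trans (add_le_add_left (Real.rpow_le_rpow hx0 ?_ (by positivity)) 1)
    exact mul_le_mul_of_nonneg_left (by linarith) (div_nonneg (by linarith) hγs.le)
  calc ∑ k ∈ Finset.range N, leaveProb ε γs α k
      ≤ ∑ k ∈ Finset.range N, ε / 3 * stayWeight γs α k :=
        Finset.sum_le_sum fun k _ => by
          have := min_le_left (ε * stayWeight γs α k) 1
          rw [leaveProb]; linarith
    _ = ε / (3 * γs) * (γs * ∑ k ∈ Finset.range N, stayWeight γs α k) := by
        rw [← Finset.mul_sum]; field_simp
    _ ≤ ε / (3 * γs) * ((N : ℝ) ^ α * stayWeight γs α N) :=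
        mul_le_mul_of_nonneg_left (mul_sum_stayWeight_le hγs.le hα0 N)
          (div_nonneg hε.1.le (by positivity))
    _ = (N : ℝ) ^ α * (ε * stayWeight γs α N) / (3 * γs) := by ring
    _ ≤ (((1 - α) / γs) ^ (α / (1 - α)) * L ^ (α / (1 - α)) + 1) *
          (Real.exp (γs / (1 - α)) * Real.exp (-b)) / (3 * γs) := by
        gcongr ?_ / _
        exact mul_le_mul hN (mul_stayWeight_natCeil_le hε hγs hα0 hα1 hbL)
          (mul_nonneg hε.1.le (stayWeight_pos hγs.le N).le) (by positivity)
    _ = _ := by ring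

theorem tendsto_sum_leaveProb (hγs : 0 < γs) (hα0 : 0 ≤ α) (hα1 : α < 1) {β : ℝ → ℝ}
    (hβ : ∀ ε ∈ Set.Ioo (0 : ℝ) 1, 0 ≤ β ε ∧ β ε ≤ |Real.log ε|)
    (hβlim : Tendsto (fun ε : ℝ => |Real.log ε| ^ (α / (1 - α)) * Real.exp (-β ε))
      (𝓝[Set.Ioo (0 : ℝ) 1] 0) (𝓝 0)) :
    Tendsto (fun ε : ℝ => ∑ k ∈ Finset.range ⌈((1 - α) / γs * (|Real.log ε| - β ε)) ^
        (1 / (1 - α))⌉₊, leaveProb ε γs α k) (𝓝[Set.Ioo (0 : ℝ) 1] 0) (𝓝 0) := by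
  have hexp : Tendsto (fun ε => Real.exp (-β ε)) (𝓝[Set.Ioo (0 : ℝ) 1] 0) (𝓝 0) := by
    refine squeeze_zero' (.of_forall fun ε => (Real.exp_pos _).le) ?_ hβlim
    filter_upwards [tendsto_abs_log_nhdsWithin_Ioo.eventually_ge_atTop 1] with ε hL
    have : 1 ≤ |Real.log ε| ^ (α / (1 - α)) :=
      Real.one_le_rpow hL (div_nonneg hα0 (by linarith))
    nlinarith [Real.exp_pos (-β ε)]
  have hbound := ((hβlim.const_mul (((1 - α) / γs) ^ (α / (1 - α)))).add hexp).const_mul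
    (Real.exp (γs / (1 - α)) / (3 * γs))
  rw [mul_zero, zero_add, mul_zero] at hbound
  refine squeeze_zero' ?_ ?_ hbound <;> filter_upwards [self_mem_nhdsWithin] with ε hε
  · exact Finset.sum_nonneg fun k _ => leaveProb_nonneg hε.1.le hγs.le k
  · exact sum_leaveProb_le hε hγs hα0 hα1 (hβ ε hε).1 (hβ ε hε).2

lemma eventually_rpow_le_mul_log_stayWeight (hγs : 0 < γs) (hα : 0 < α) (hα1 : α < 1) {d : ℝ}
    (hd : (1 - α) / γs < d) :
    ∀ᶠ k : ℕ in atTop, (k : ℝ) ^ (1 - α) ≤ d * Real.log (stayWeight γs α k) := by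
  have h1α : 0 < 1 - α := by linarith
  obtain ⟨d', hd', hd'd⟩ := exists_between hd
  have hd'pos : 0 < d' := lt_trans (by positivity) hd'
  set δ := d' * γs / (1 - α) - 1
  have hδ : 0 < δ := by
    rw [sub_pos, lt_div_iff₀ h1α, one_mul, ← div_lt_iff₀ hγs]; exact hd'
  have hcoeff : γs / ((1 + δ) * (1 - α)) = 1 / d' := by
    simp only [δ, add_sub_cancel]; field_simp
  obtain ⟨J, hJ⟩ := eventually_atTop.1 <| ((tendsto_rpow_neg_atTop hα).comp
    tendsto_natCast_atTop_atTop |>.const_mul γs).eventually (ge_mem_nhds (by simpa using hδ))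
  have hrpow : Tendsto (fun k : ℕ => (k : ℝ) ^ (1 - α)) atTop atTop :=
    (tendsto_rpow_atTop h1α).comp tendsto_natCast_atTop_atTop
  filter_upwards [eventually_ge_atTop (J + 1), hrpow.eventually_ge_atTop
    (d / (d - d') * ((J + 1 : ℕ) : ℝ) ^ (1 - α))] with k hJk hk
  have hlog := log_stayWeight_ge hγs.le hα.le hα1 hδ.le J.succ_pos hJk
    fun j hj => hJ j (by omega)
  rw [hcoeff] at hlog
  rw [div_mul_eq_mul_div, div_le_iff₀ (by linarith)] at hk
  rw [one_div_mul_eq_div, div_le_iff₀ hd'pos] at hlog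
  nlinarith

lemma prod_one_sub_leaveProb_le (hε : 0 ≤ ε) (hγs : 0 ≤ γs) {k₀ M : ℕ}
    (h : ∀ k ≥ k₀, 1 ≤ ε * stayWeight γs α k) :
    ∏ k ∈ Finset.range M, (1 - leaveProb ε γs α k) ≤ (2 / 3 : ℝ) ^ (M - k₀) := by
  calc ∏ k ∈ Finset.range M, (1 - leaveProb ε γs α k)
      ≤ ∏ k ∈ Finset.Ico k₀ M, (1 - leaveProb ε γs α k) :=
        Finset.prod_le_prod_of_subset_of_le_one
          (fun k hk => Finset.mem_range.2 (Finset.mem_Ico.1 hk).2)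
          (fun k _ => by linarith [leaveProb_le ε γs α k])
          fun k _ _ => by linarith [leaveProb_nonneg (α := α) hε hγs k]
    _ = (2 / 3 : ℝ) ^ (M - k₀) := by
        rw [Finset.prod_congr rfl fun k hk => by
          rw [leaveProb_of_one_le (h k (Finset.mem_Ico.1 hk).1)], Finset.prod_const,
          Nat.card_Ico]
        norm_num

lemma one_le_mul_stayWeight (hε : ε ∈ Set.Ioo 0 1) (hγs : 0 ≤ γs) (hα1 : α < 1) {d : ℝ}
    (hd : 0 < d) {k : ℕ} (hlog : (k : ℝ) ^ (1 - α) ≤ d * Real.log (stayWeight γs α k))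
    (hk : (d * |Real.log ε|) ^ (1 / (1 - α)) ≤ k) :
    1 ≤ ε * stayWeight γs α k := by
  have h1α : 0 < 1 - α := by linarith
  have hdL : 0 ≤ d * |Real.log ε| := mul_nonneg hd.le (abs_nonneg _)
  have hkd : d * |Real.log ε| ≤ (k : ℝ) ^ (1 - α) := by
    have h := Real.rpow_le_rpow (Real.rpow_nonneg hdL _) hk h1α.le
    rwa [← Real.rpow_mul hdL, one_div_mul_cancel h1α.ne', Real.rpow_one] at h
  have hL : |Real.log ε| ≤ Real.log (stayWeight γs α k) :=
    le_of_mul_le_mul_left (hkd.trans hlog) hd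
  calc (1 : ℝ) = ε * Real.exp |Real.log ε| := (mul_exp_abs_log hε.1 hε.2.le).symm
    _ ≤ ε * stayWeight γs α k := by
      gcongr
      · exact hε.1.le
      · exact (Real.exp_le_exp.2 hL).trans_eq (Real.exp_log (stayWeight_pos hγs k))

theorem tendsto_prod_one_sub_leaveProb (hγs : 0 < γs) (hα : 0 < α) (hα1 : α < 1) {C : ℝ}
    (hC : ((1 - α) / γs) ^ (1 / (1 - α)) < C) :
    Tendsto (fun ε : ℝ => ∏ k ∈ Finset.range (⌈C * |Real.log ε| ^ (1 / (1 - α))⌉₊ - 1),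
        (1 - leaveProb ε γs α k)) (𝓝[Set.Ioo (0 : ℝ) 1] 0) (𝓝 0) := by
  have h1α : 0 < 1 - α := by linarith
  set p := 1 / (1 - α)
  have hp : 0 < p := by positivity
  obtain ⟨d, hdC, hd⟩ : ∃ d, d ^ p < C ∧ (1 - α) / γs < d :=
    (((Real.continuousAt_rpow_const _ _ (Or.inr hp.le)).eventually (gt_mem_nhds hC)).filter_mono
      nhdsWithin_le_nhds |>.and self_mem_nhdsWithin).exists (f := 𝓝[>] ((1 - α) / γs))
  have hdpos : 0 < d := lt_trans (by positivity) hd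
  obtain ⟨K, hK⟩ := eventually_atTop.1 (eventually_rpow_le_mul_log_stayWeight hγs hα hα1 hd)
  set L := fun ε : ℝ => |Real.log ε|
  set M := fun ε : ℝ => ⌈C * L ε ^ p⌉₊ - 1
  set k₀ := fun ε : ℝ => max K ⌈(d * L ε) ^ p⌉₊
  have hleave : ∀ ε ∈ Set.Ioo (0 : ℝ) 1, ∀ k ≥ k₀ ε, 1 ≤ ε * stayWeight γs α k :=
    fun ε hε k hk => one_le_mul_stayWeight hε hγs.le hα1 hdpos (hK k ((le_max_left _ _).trans hk))
      ((Nat.le_ceil _).trans (Nat.cast_le.2 ((le_max_right _ _).trans hk)))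
  have hgap : Tendsto (fun ε => M ε - k₀ ε) (𝓝[Set.Ioo (0 : ℝ) 1] 0) atTop := by
    refine tendsto_natCast_atTop_iff.1 (tendsto_atTop_mono' _ ?_
      (tendsto_atTop_add_const_right _ (-(K + 3 : ℝ)) (((tendsto_rpow_atTop hp).comp
        tendsto_abs_log_nhdsWithin_Ioo).const_mul_atTop (sub_pos.2 hdC))))
    refine .of_forall fun ε => ?_
    have hL : 0 ≤ L ε := abs_nonneg _
    have hM : C * L ε ^ p - 2 ≤ M ε := by
      have := natCast_sub_le_natCast_tsub ⌈C * L ε ^ p⌉₊ 1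
      have := Nat.le_ceil (C * L ε ^ p)
      push_cast at *; linarith
    have hk₀ : (k₀ ε : ℝ) ≤ K + (d ^ p * L ε ^ p + 1) := by
      have hmax : (k₀ ε : ℝ) ≤ K + ⌈(d * L ε) ^ p⌉₊ := by
        exact_mod_cast max_le (Nat.le_add_right K _) (Nat.le_add_left _ K)
      have hceil := Nat.ceil_lt_add_one (Real.rpow_nonneg (mul_nonneg hdpos.le hL) p)
      rw [Real.mul_rpow hdpos.le hL] at hmax hceil
      linarith
    have := natCast_sub_le_natCast_tsub (M ε) (k₀ ε)
    simp only [Function.comp_apply]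
    linarith
  refine squeeze_zero' ?_ ?_ ((tendsto_pow_atTop_nhds_zero_of_lt_one (by norm_num)
    (by norm_num : (2 / 3 : ℝ) < 1)).comp hgap) <;> filter_upwards [self_mem_nhdsWithin] with ε hε
  · exact Finset.prod_nonneg fun k _ => by linarith [leaveProb_le ε γs α k]
  · exact prod_one_sub_leaveProb_le hε.1.le hγs.le (hleave ε hε)

end WangLandau

open WangLandau

/-- For `α ∈ (0,1)`, with `a(ε) = ((1−α)/γ⋆·(|ln ε| − β(ε)))^{1/(1−α)}`
and `b̃(ε) = C |ln ε|^{1/(1−α)}`, the first passage time to state 2 satisfies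
`lim_{ε→0} P(a(ε) < T⁰₁→₂ < b̃(ε)) = 1`. -/
theorem stmt8 (γs α : ℝ) (hγs : 0 < γs) (hα : 0 < α) (hα1 : α < 1)
    (μ : ℝ → Measure (ℕ → WLState))
    (hprob : ∀ ε ∈ Set.Ioo (0 : ℝ) 1, IsProbabilityMeasure (μ ε))
    (hμ : ∀ ε ∈ Set.Ioo (0 : ℝ) 1, IsWLLaw ε γs α (μ ε))
    (β : ℝ → ℝ) (hβ : ∀ ε ∈ Set.Ioo (0 : ℝ) 1, 0 ≤ β ε ∧ β ε ≤ |Real.log ε|)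
    (hβlim : Tendsto (fun ε : ℝ => |Real.log ε| ^ (α / (1 - α)) * Real.exp (-β ε))
      (𝓝[Set.Ioo (0 : ℝ) 1] 0) (𝓝 0))
    (C : ℝ) (hC : ((1 - α) / γs) ^ (1 / (1 - α)) < C) :
    Tendsto
      (fun ε : ℝ =>
        (μ ε {ω : ℕ → WLState |
          ((1 - α) / γs * (|Real.log ε| - β ε)) ^ (1 / (1 - α)) < (hitTime 1 ω : ℝ) ∧
            (hitTime 1 ω : ℝ) < C * |Real.log ε| ^ (1 / (1 - α))}).toReal)
      (𝓝[Set.Ioo (0 : ℝ) 1] 0) (𝓝 1) := by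
  have hlower := (tendsto_const_nhds (x := (1 : ℝ))).sub
    (tendsto_sum_leaveProb hγs hα.le hα1 hβ hβlim) |>.sub
    (tendsto_prod_one_sub_leaveProb hγs hα hα1 hC)
  rw [sub_zero, sub_zero] at hlower
  refine tendsto_of_tendsto_of_tendsto_of_le_of_le' hlower tendsto_const_nhds ?_ ?_ <;>
    filter_upwards [self_mem_nhdsWithin] with ε hε <;> have := hprob ε hε
  · refine one_sub_sum_sub_prod_le_measure_hitTime hε.1.le hγs.le (hμ ε hε) (Nat.le_ceil _) ?_
    exact natCast_ceil_sub_one_lt (mul_pos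
      ((Real.rpow_nonneg (div_pos (sub_pos.2 hα1) hγs).le _).trans_lt hC)
      (Real.rpow_pos_of_pos (abs_pos.2 (Real.log_neg hε.1 hε.2).ne) _))
  · exact measureReal_le_one
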